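/- The constant 2 in the fattening lemma is best possible: for every b with 0 < b < 2 there exist a graph G with at least one edge and a real number η with 0 < η ≤ 1 such that every η-fat partition 𝒜 of V(G) satisfies q_𝒜(G) ≤ q*(G) − b·η. (Explicitly, one may take G to be a disjoint union of k triangles for a sufficiently large odd integer k, and η with 1/2 − 1/(6k) < η and 1 − 1/k > b·η; then the only η-fat partition is the trivial one-part partition, whose modularity score is 0, while q*(G) = 1 − 1/k.) -/

import Mathlib

open Finset
open scoped Classical

/-- The number of edges of a finite graph. -/
noncomputable def edgeCount {V : Type} [Fintype V] [DecidableEq V] (G : SimpleGraph V) : ℕ :=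
  G.edgeFinset.card

/-- vol(A): the sum over vertices of A of their degree in G. -/
noncomputable def degSum {V : Type} [Fintype V] [DecidableEq V] (G : SimpleGraph V)
    (A : Finset V) : ℕ :=
  ∑ v ∈ A, G.degree v

/-- e(A): the number of edges of G with both endpoints in A. -/
noncomputable def intEdges {V : Type} [Fintype V] [DecidableEq V] (G : SimpleGraph V)
    (A : Finset V) : ℕ :=
  (G.edgeFinset.filter (fun e => ∀ v ∈ e, v ∈ A)).card

/-- The modularity score q_𝒜(G) of a vertex partition 𝒜 of G; it is 0 if G has no edges. -/
noncomputable def modScore {V : Type} [Fintype V] [DecidableEq V] (G : SimpleGraph V)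
    (P : Finpartition (univ : Finset V)) : ℝ :=
  if edgeCount G = 0 then 0 else
    (∑ A ∈ P.parts, (intEdges G A : ℝ)) / (edgeCount G : ℝ)
      - (∑ A ∈ P.parts, (degSum G A : ℝ) ^ 2) / (4 * (edgeCount G : ℝ) ^ 2)

/-- The modularity q*(G) of a graph: the maximum of q_𝒜(G) over all vertex partitions 𝒜. -/
noncomputable def modularity {V : Type} [Fintype V] [DecidableEq V] (G : SimpleGraph V) : ℝ :=
  ⨆ P : Finpartition (univ : Finset V), modScore G P

/-- The probability that the random subgraph G_p of G (each edge of G retained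
independently with probability p) satisfies the predicate Q. -/
noncomputable def subgraphProb {V : Type} [Fintype V] [DecidableEq V] (G : SimpleGraph V)
    (p : ℝ) (Q : SimpleGraph V → Prop) : ℝ :=
  ∑ F ∈ G.edgeFinset.powerset,
    if Q (SimpleGraph.fromEdgeSet (F : Set (Sym2 V))) then
      p ^ F.card * (1 - p) ^ (G.edgeFinset.card - F.card)
    else 0

/-!
Take `k` disjoint edges. Splitting them into their `k` edges captures every edge and has
`∑ vol(A)² = 4k`, so `q* ≥ 1 - 1/k`. On the other hand, once `η > 1/2` two disjoint parts
cannot both carry more than half of the total volume, so the only `η`-fat partition is the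
one-part partition, whose score is `1 - (2m)²/(4m²) = 0`. With `η = 1/2 + (2 - b)/8` and
`k > 4/(2 - b)` one gets `b η ≤ 1 - 1/k ≤ q*`.
-/

section Modularity

variable {V : Type} [Fintype V] [DecidableEq V] (G : SimpleGraph V)
  (P : Finpartition (univ : Finset V))

lemma degSum_univ : degSum G univ = 2 * edgeCount G :=
  G.sum_degrees_eq_twice_card_edges

lemma intEdges_univ : intEdges G univ = edgeCount G := by
  simp [intEdges, edgeCount]

lemma sum_degSum_parts : ∑ A ∈ P.parts, degSum G A = 2 * edgeCount G := by
  rw [← degSum_univ, degSum]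
  conv_rhs => rw [← P.biUnion_parts]
  rw [sum_biUnion P.supIndep.pairwiseDisjoint]
  rfl

lemma sum_intEdges_eq_card_biUnion :
    ∑ A ∈ P.parts, intEdges G A =
      #(P.parts.biUnion fun A => G.edgeFinset.filter fun e => ∀ v ∈ e, v ∈ A) := by
  refine (card_biUnion fun A hA B hB hAB => disjoint_left.2 fun e heA heB => hAB ?_).symm
  rw [mem_filter] at heA heB
  exact P.eq_of_mem_parts hA hB (heA.2 _ e.out_fst_mem) (heB.2 _ e.out_fst_mem)

lemma sum_intEdges_le : ∑ A ∈ P.parts, intEdges G A ≤ edgeCount G := by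
  rw [sum_intEdges_eq_card_biUnion]
  exact card_le_card (biUnion_subset.2 fun _ _ => filter_subset _ _)

lemma sum_intEdges_eq_edgeCount (hP : ∀ u v, G.Adj u v → v ∈ P.part u) :
    ∑ A ∈ P.parts, intEdges G A = edgeCount G := by
  refine (sum_intEdges_le G P).antisymm ?_
  rw [sum_intEdges_eq_card_biUnion]
  refine card_le_card fun e he => ?_
  induction e using Sym2.ind with
  | h u v =>
    refine mem_biUnion.2 ⟨P.part u, P.part_mem.2 (mem_univ u), mem_filter.2 ⟨he, ?_⟩⟩
    rw [SimpleGraph.mem_edgeFinset, SimpleGraph.mem_edgeSet] at he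
    simp only [Sym2.mem_iff, forall_eq_or_imp, forall_eq]
    exact ⟨P.mem_part (mem_univ u), hP u v he⟩

lemma modScore_le_one : modScore G P ≤ 1 := by
  unfold modScore
  split_ifs with hm
  · norm_num
  · have hint : (∑ A ∈ P.parts, (intEdges G A : ℝ)) / edgeCount G ≤ 1 := by
      rw [div_le_one (by positivity), ← Nat.cast_sum]
      exact_mod_cast sum_intEdges_le G P
    have hvol : 0 ≤ (∑ A ∈ P.parts, (degSum G A : ℝ) ^ 2) / (4 * (edgeCount G : ℝ) ^ 2) := by
      positivity
    linarith

lemma modScore_le_modularity : modScore G P ≤ modularity G :=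
  le_ciSup (f := modScore G) ⟨1, Set.forall_mem_range.2 (modScore_le_one G)⟩ P

lemma one_sub_div_le_modScore (hm : 0 < edgeCount G) (hP : ∀ u v, G.Adj u v → v ∈ P.part u)
    {d : ℕ} (hvol : ∀ A ∈ P.parts, degSum G A ≤ d) :
    1 - d / (2 * edgeCount G : ℝ) ≤ modScore G P := by
  have hm' : (0 : ℝ) < edgeCount G := by exact_mod_cast hm
  have hsq : ∑ A ∈ P.parts, (degSum G A : ℝ) ^ 2 ≤ d * (2 * edgeCount G) := by
    calc ∑ A ∈ P.parts, (degSum G A : ℝ) ^ 2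
        ≤ ∑ A ∈ P.parts, (d : ℝ) * degSum G A :=
          sum_le_sum fun A hA => by rw [sq]; gcongr; exact_mod_cast hvol A hA
      _ = d * (2 * edgeCount G) := by
          rw [← mul_sum]; exact_mod_cast congrArg (d * ·) (sum_degSum_parts G P)
  rw [modScore, if_neg hm.ne', ← Nat.cast_sum, sum_intEdges_eq_edgeCount G P hP, div_self hm'.ne',
    sub_le_sub_iff_left, div_le_div_iff₀ (by positivity) (by positivity)]
  nlinarith

lemma card_parts_le_one_of_fat {η : ℝ} (hη : 1 / 2 < η) (hm : 0 < edgeCount G)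
    (hfat : ∀ A ∈ P.parts, η * (2 * edgeCount G) ≤ degSum G A) : #P.parts ≤ 1 := by
  refine card_le_one.2 fun A hA B hB => by_contra fun hAB => ?_
  have hAB : degSum G A + degSum G B ≤ 2 * edgeCount G := by
    rw [← sum_degSum_parts G P, ← sum_pair hAB]
    exact sum_le_sum_of_subset (insert_subset hA (singleton_subset_iff.2 hB))
  have hm' : (0 : ℝ) < edgeCount G := by exact_mod_cast hm
  have hAB' : (degSum G A + degSum G B : ℝ) ≤ 2 * edgeCount G := by exact_mod_cast hAB
  nlinarith [hfat A hA, hfat B hB]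

lemma parts_eq_singleton_univ [Nonempty V] (hP : #P.parts ≤ 1) : P.parts = {univ} := by
  obtain ⟨v⟩ := ‹Nonempty V›
  have hv : P.part v ∈ P.parts := P.part_mem.2 (mem_univ v)
  have hparts : P.parts = {P.part v} :=
    eq_singleton_iff_unique_mem.2 ⟨hv, fun B hB => card_le_one.1 hP B hB _ hv⟩
  have huniv := P.sup_parts
  rw [hparts, sup_singleton, id] at huniv
  rw [hparts, huniv]

lemma modScore_eq_zero_of_card_parts_le_one (hP : #P.parts ≤ 1) : modScore G P = 0 := by
  rw [modScore]
  split_ifs with hm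
  · rfl
  obtain ⟨e, -⟩ := card_ne_zero.1 hm
  have : Nonempty V := ⟨e.out.1⟩
  have hm' : (edgeCount G : ℝ) ≠ 0 := by exact_mod_cast hm
  rw [parts_eq_singleton_univ P hP, sum_singleton, sum_singleton, intEdges_univ, degSum_univ]
  field_simp
  push_cast
  ring

end Modularity

def pairGraph (k : ℕ) : SimpleGraph (Fin (2 * k)) where
  Adj i j := i ≠ j ∧ (i : ℕ) / 2 = (j : ℕ) / 2
  symm := ⟨fun _ _ h => ⟨h.1.symm, h.2.symm⟩⟩
  loopless := ⟨fun _ h => h.1 rfl⟩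

noncomputable def pairPartition (k : ℕ) : Finpartition (univ : Finset (Fin (2 * k))) :=
  Finpartition.ofSetoid (Setoid.ker fun v : Fin (2 * k) => (v : ℕ) / 2)

lemma mem_part_pairPartition {k : ℕ} {v w : Fin (2 * k)} :
    w ∈ (pairPartition k).part v ↔ (v : ℕ) / 2 = (w : ℕ) / 2 :=
  Finpartition.mem_part_ofSetoid_iff_rel

namespace pairGraph

variable {k : ℕ}

def partner (v : Fin (2 * k)) : Fin (2 * k) :=
  ⟨2 * (v / 2) + (1 - v % 2), by omega⟩

lemma neighborFinset_eq (v : Fin (2 * k)) : (pairGraph k).neighborFinset v = {partner v} := by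
  ext w
  rw [SimpleGraph.mem_neighborFinset, mem_singleton]
  change v ≠ w ∧ _ ↔ _
  have := w.isLt
  simp only [ne_eq, partner, Fin.ext_iff]
  omega

lemma degree_eq_one (v : Fin (2 * k)) : (pairGraph k).degree v = 1 := by
  rw [← SimpleGraph.card_neighborFinset_eq_degree, neighborFinset_eq, card_singleton]

lemma edgeCount_eq : edgeCount (pairGraph k) = k := by
  have h := (pairGraph k).sum_degrees_eq_twice_card_edges
  simp only [degree_eq_one, sum_const, card_univ, Fintype.card_fin, smul_eq_mul, mul_one] at h
  exact (Nat.eq_of_mul_eq_mul_left two_pos h).symm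

lemma degSum_eq_card (A : Finset (Fin (2 * k))) : degSum (pairGraph k) A = #A := by
  simp [degSum, degree_eq_one]

lemma mem_part_of_adj {u v : Fin (2 * k)} (h : (pairGraph k).Adj u v) :
    v ∈ (pairPartition k).part u :=
  mem_part_pairPartition.2 h.2

lemma degSum_le_two_of_mem_parts {A : Finset (Fin (2 * k))} (hA : A ∈ (pairPartition k).parts) :
    degSum (pairGraph k) A ≤ 2 := by
  obtain ⟨v, hv⟩ := (pairPartition k).nonempty_of_mem_parts hA
  have hsub : A ⊆ insert v ((pairGraph k).neighborFinset v) := fun w hw => by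
    rw [← (pairPartition k).part_eq_of_mem hA hv, mem_part_pairPartition] at hw
    rw [mem_insert, SimpleGraph.mem_neighborFinset]
    by_cases hvw : v = w
    · exact Or.inl hvw.symm
    · exact Or.inr ⟨hvw, hw⟩
  rw [degSum_eq_card]
  calc #A ≤ #(insert v ((pairGraph k).neighborFinset v)) := card_le_card hsub
    _ ≤ #((pairGraph k).neighborFinset v) + 1 := card_insert_le _ _
    _ = 2 := by rw [SimpleGraph.card_neighborFinset_eq_degree, degree_eq_one]

lemma one_sub_inv_le_modularity (hk : 0 < k) : 1 - 1 / (k : ℝ) ≤ modularity (pairGraph k) := by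
  have h := one_sub_div_le_modScore (pairGraph k) (pairPartition k) (by rwa [edgeCount_eq])
    (fun _ _ => mem_part_of_adj) (fun _ => degSum_le_two_of_mem_parts)
  rw [edgeCount_eq] at h
  calc 1 - 1 / (k : ℝ) = 1 - (2 : ℕ) / (2 * k : ℝ) := by push_cast; ring
    _ ≤ _ := h.trans (modScore_le_modularity _ _)

end pairGraph

/-- The constant 2 in the fattening lemma is best possible: for every 0 < b < 2
there are a finite graph G with at least one edge and 0 < η ≤ 1 such that every
η-fat partition 𝒜 of V(G) satisfies q_𝒜(G) ≤ q*(G) − b·η. -/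
theorem statement6 (b : ℝ) (hb0 : 0 < b) (hb2 : b < 2) :
    ∃ (n : ℕ) (G : SimpleGraph (Fin n)) (η : ℝ),
      0 < edgeCount G ∧ 0 < η ∧ η ≤ 1 ∧
      ∀ A : Finpartition (univ : Finset (Fin n)),
        (∀ s ∈ A.parts, η * (2 * (edgeCount G : ℝ)) ≤ (degSum G s : ℝ)) →
        modScore G A ≤ modularity G - b * η := by
  have hb : 0 < 2 - b := by linarith
  obtain ⟨k, hk⟩ := exists_nat_gt (4 / (2 - b))
  have hk0 : (0 : ℝ) < k := (div_pos four_pos hb).trans hk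
  have hinv : 1 / (k : ℝ) ≤ (2 - b) / 4 := by
    rw [div_le_div_iff₀ hk0 four_pos]
    nlinarith [(div_lt_iff₀ hb).1 hk]
  have hm : 0 < edgeCount (pairGraph k) := by rw [pairGraph.edgeCount_eq]; exact_mod_cast hk0
  set η : ℝ := 1 / 2 + (2 - b) / 8 with hη
  have hbη : b * η ≤ 1 - 1 / k := by rw [hη]; nlinarith [sq_nonneg (2 - b)]
  refine ⟨2 * k, pairGraph k, η, hm, by positivity, by linarith, fun A hfat => ?_⟩
  have hhalf : 1 / 2 < η := by linarith
  rw [modScore_eq_zero_of_card_parts_le_one _ _ (card_parts_le_one_of_fat _ _ hhalf hm hfat)]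
  linarith [pairGraph.one_sub_inv_le_modularity (Nat.cast_pos.1 hk0)]
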